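/- Let {d_i}_{i∈ℕ} be a sequence of linear maps on 𝒜 with d₀ = id_𝒜 and let {δ_i}_{i∈ℕ} be a sequence of derivations on 𝒜 with δ₀ = 0. If the recursive relation n·d_n = Σ_{k=0}^{n−1} δ_{k+1} ∘ d_{n−1−k} holds for all n ≥ 1, then {d_i}_{i∈ℕ} is a higher derivation. -/
import Mathlib

private lemma tri' {M : Type*} [AddCommMonoid M] (n : ℕ) (f : ℕ → ℕ → M) :
    ∑ k ∈ Finset.range n, ∑ j ∈ Finset.range (n - k), f k j
    = ∑ i ∈ Finset.range n, ∑ k ∈ Finset.range (i + 1), f k (i - k) := by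
  induction n with
  | zero => simp
  | succ n ih =>
    have step : ∀ k ∈ Finset.range (n+1),
        ∑ j ∈ Finset.range (n+1-k), f k j
          = ∑ j ∈ Finset.range (n-k), f k j + f k (n-k) := by
      intro k hk
      have hk' := Finset.mem_range.mp hk
      have : n + 1 - k = (n - k) + 1 := by omega
      rw [this, Finset.sum_range_succ]
    calc ∑ k ∈ Finset.range (n+1), ∑ j ∈ Finset.range (n+1-k), f k j
        = ∑ k ∈ Finset.range (n+1), (∑ j ∈ Finset.range (n-k), f k j + f k (n-k)) :=
          Finset.sum_congr rfl step
      _ = (∑ k ∈ Finset.range (n+1), ∑ j ∈ Finset.range (n-k), f k j)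
            + ∑ k ∈ Finset.range (n+1), f k (n-k) := Finset.sum_add_distrib
      _ = (∑ k ∈ Finset.range n, ∑ j ∈ Finset.range (n-k), f k j)
            + ∑ k ∈ Finset.range (n+1), f k (n-k) := by
          rw [Finset.sum_range_succ]; simp
      _ = (∑ i ∈ Finset.range n, ∑ k ∈ Finset.range (i+1), f k (i-k))
            + ∑ k ∈ Finset.range (n+1), f k (n-k) := by rw [ih]
      _ = ∑ i ∈ Finset.range (n+1), ∑ k ∈ Finset.range (i+1), f k (i-k) :=
          (Finset.sum_range_succ _ _).symm

private lemma swap' {M : Type*} [AddCommMonoid M] (n : ℕ) (f : ℕ → ℕ → M) :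
    ∑ k ∈ Finset.range n, ∑ j ∈ Finset.range (n - k), f k j
    = ∑ j ∈ Finset.range n, ∑ k ∈ Finset.range (n - j), f k j := by
  induction n with
  | zero => simp
  | succ n ih =>
    have step : ∀ (g : ℕ → ℕ → M) (k : ℕ), k ∈ Finset.range (n+1) →
        ∑ j ∈ Finset.range (n+1-k), g k j
          = ∑ j ∈ Finset.range (n-k), g k j + g k (n-k) := by
      intro g k hk
      have hk' := Finset.mem_range.mp hk
      have : n + 1 - k = (n - k) + 1 := by omega
      rw [this, Finset.sum_range_succ]
    have row : ∑ k ∈ Finset.range (n+1), f k (n-k)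
        = ∑ j ∈ Finset.range (n+1), f (n-j) j := by
      have := Finset.sum_range_reflect (fun k => f k (n - k)) (n+1)
      rw [← this]
      refine Finset.sum_congr rfl fun j hj => ?_
      have hj' := Finset.mem_range.mp hj
      congr 1 <;> omega
    calc ∑ k ∈ Finset.range (n+1), ∑ j ∈ Finset.range (n+1-k), f k j
        = ∑ k ∈ Finset.range (n+1), (∑ j ∈ Finset.range (n-k), f k j + f k (n-k)) :=
          Finset.sum_congr rfl (step f)
      _ = (∑ k ∈ Finset.range (n+1), ∑ j ∈ Finset.range (n-k), f k j)
            + ∑ k ∈ Finset.range (n+1), f k (n-k) := Finset.sum_add_distrib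
      _ = (∑ k ∈ Finset.range n, ∑ j ∈ Finset.range (n-k), f k j)
            + ∑ k ∈ Finset.range (n+1), f k (n-k) := by
          rw [Finset.sum_range_succ]; simp
      _ = (∑ j ∈ Finset.range n, ∑ k ∈ Finset.range (n-j), f k j)
            + ∑ j ∈ Finset.range (n+1), f (n-j) j := by rw [ih, row]
      _ = (∑ j ∈ Finset.range (n+1), ∑ k ∈ Finset.range (n-j), f k j)
            + ∑ j ∈ Finset.range (n+1), f (n-j) j := by
          rw [Finset.sum_range_succ (fun j => ∑ k ∈ Finset.range (n-j), f k j)]; simp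
      _ = ∑ j ∈ Finset.range (n+1), (∑ k ∈ Finset.range (n-j), f k j + f (n-j) j) :=
          Finset.sum_add_distrib.symm
      _ = ∑ j ∈ Finset.range (n+1), ∑ k ∈ Finset.range (n+1-j), f k j := by
          refine Finset.sum_congr rfl fun j hj => ?_
          exact (step (fun j k => f k j) j hj).symm

/-- if `{dᵢ}` (with `d₀ = id`) satisfies the recursion
`n·dₙ = Σ_{k=0}^{n-1} δ_{k+1} ∘ d_{n-1-k}` where each `δᵢ` is a derivation (`δ₀ = 0`),
then `{dᵢ}` is a higher derivation. -/
theorem statement12 {𝔽 A : Type*} [Field 𝔽] [CharZero 𝔽] [Ring A] [Algebra 𝔽 A]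
    (d : ℕ → (A →ₗ[𝔽] A)) (hd0 : d 0 = LinearMap.id)
    (δ : ℕ → (A →ₗ[𝔽] A)) (hδ0 : δ 0 = 0)
    -- each `δᵢ` is a derivation
    (hD : ∀ i, ∀ a b : A, δ i (a * b) = δ i a * b + a * δ i b)
    -- the recursive relation `n dₙ = Σ_{k=0}^{n-1} δ_{k+1} d_{n-1-k}`
    (hrec : ∀ n : ℕ, 1 ≤ n →
      (n : 𝔽) • d n = ∑ k ∈ Finset.range n, (δ (k + 1)).comp (d (n - 1 - k))) :
    -- `{dᵢ}` is a higher derivation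
    ∀ n : ℕ, ∀ a b : A, d n (a * b) =
      ∑ i ∈ Finset.range (n + 1), d i a * d (n - i) b := by
  have hrec' : ∀ (m : ℕ) (x : A), (m : 𝔽) • d m x
      = ∑ k ∈ Finset.range m, δ (k + 1) (d (m - 1 - k) x) := by
    intro m x
    rcases Nat.eq_zero_or_pos m with rfl | hm
    · simp
    · have := congrArg (fun f : A →ₗ[𝔽] A => f x) (hrec m hm)
      simpa using this
  intro n
  induction n using Nat.strong_induction_on with
  | _ n ih =>
    intro a b
    rcases Nat.eq_zero_or_pos n with rfl | hn
    · simp [hd0]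
    · have hne : (n : 𝔽) ≠ 0 := Nat.cast_ne_zero.mpr hn.ne'
      apply smul_right_injective A hne
      show (n : 𝔽) • d n (a * b) = (n : 𝔽) • ∑ i ∈ Finset.range (n + 1), d i a * d (n - i) b
      have L : (n : 𝔽) • d n (a * b)
          = (∑ k ∈ Finset.range n, ∑ i ∈ Finset.range (n - k),
              δ (k+1) (d i a) * d (n - 1 - k - i) b)
          + (∑ k ∈ Finset.range n, ∑ i ∈ Finset.range (n - k),
              d i a * δ (k+1) (d (n - 1 - k - i) b)) := by
        rw [hrec' n (a*b), ← Finset.sum_add_distrib]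
        refine Finset.sum_congr rfl fun k hk => ?_
        have hk' := Finset.mem_range.mp hk
        have ihk := ih (n - 1 - k) (by omega) a b
        have hnk : n - 1 - k + 1 = n - k := by omega
        rw [ihk, hnk, map_sum, ← Finset.sum_add_distrib]
        exact Finset.sum_congr rfl fun i _ => hD (k+1) _ _
      have R : (n : 𝔽) • ∑ i ∈ Finset.range (n + 1), d i a * d (n - i) b
          = (∑ i ∈ Finset.range (n + 1),
              ∑ k ∈ Finset.range i, δ (k+1) (d (i - 1 - k) a) * d (n - i) b)
          + (∑ i ∈ Finset.range (n + 1),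
              ∑ k ∈ Finset.range (n - i), d i a * δ (k+1) (d (n - i - 1 - k) b)) := by
        rw [Finset.smul_sum, ← Finset.sum_add_distrib]
        refine Finset.sum_congr rfl fun i hi => ?_
        have hi' : i ≤ n := by have := Finset.mem_range.mp hi; omega
        have hcast : (n : 𝔽) = (i : 𝔽) + ((n - i : ℕ) : 𝔽) := by
          rw [← Nat.cast_add]; congr 1; omega
        rw [hcast, add_smul, ← smul_mul_assoc, ← mul_smul_comm, hrec' i a, hrec' (n - i) b,
          Finset.sum_mul, Finset.mul_sum]
      rw [L, R]
      congr 1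
      · -- S1 = T1
        rw [tri' n (fun k j => δ (k+1) (d j a) * d (n - 1 - k - j) b),
          Finset.sum_range_succ' (fun i => ∑ k ∈ Finset.range i,
            δ (k+1) (d (i - 1 - k) a) * d (n - i) b)]
        simp only [Finset.range_zero, Finset.sum_empty, add_zero]
        refine Finset.sum_congr rfl fun i hi => ?_
        refine Finset.sum_congr rfl fun k hk => ?_
        have hi' := Finset.mem_range.mp hi
        have hk' := Finset.mem_range.mp hk
        rw [show i + 1 - 1 - k = i - k from by omega,
          show n - (i + 1) = n - 1 - k - (i - k) from by omega]
      · -- S2 = T2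
        rw [swap' n (fun k i => d i a * δ (k+1) (d (n - 1 - k - i) b)),
          Finset.sum_range_succ]
        simp only [Nat.sub_self, Finset.range_zero, Finset.sum_empty, add_zero]
        refine Finset.sum_congr rfl fun i _ => ?_
        refine Finset.sum_congr rfl fun k _ => ?_
        rw [show n - i - 1 - k = n - 1 - k - i from by omega]
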